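/- (Replace an edge by a soft square) Let x be an eigenvector of L(G) for an eigenvalue λ and let ij be an edge of G with x_i = −x_j. Let G' be the graph obtained from G by deleting the edge ij, adding two new vertices k and l, and adding the four edges ik, kj, il, lj. Then the vector x' that agrees with x on V(G) and has x'_k = x'_l = 0 is an eigenvector of L(G') for the same eigenvalue λ. -/
import Mathlib
open Matrix

def lap {V : Type*} [Fintype V] [DecidableEq V] (G : SimpleGraph V) [DecidableRel G.Adj] :
    Matrix V V ℝ :=
  Matrix.of fun v w => if v = w then (G.degree v : ℝ) else if G.Adj v w then -1 else 0

lemma lap_mulVec {V : Type*} [Fintype V] [DecidableEq V] (G : SimpleGraph V)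
    [DecidableRel G.Adj] (x : V → ℝ) (v : V) :
    (lap G *ᵥ x) v = ∑ w, if G.Adj v w then x v - x w else 0 := by
  have hdeg : (G.degree v : ℝ) = ∑ w, if G.Adj v w then (1:ℝ) else 0 := by
    rw [SimpleGraph.degree, SimpleGraph.neighborFinset_eq_filter, Finset.card_filter]
    push_cast
    simp [apply_ite]
  have h0 : (lap G *ᵥ x) v = ∑ w, (if v = w then (G.degree v : ℝ) else if G.Adj v w then -1 else 0) * x w := rfl
  rw [h0]
  have step : ∀ w : V, (if v = w then (G.degree v : ℝ) else if G.Adj v w then -1 else 0) * x w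
      = (if v = w then (G.degree v : ℝ) * x w else 0) + (if G.Adj v w then -(x w) else 0) := by
    intro w
    by_cases h : v = w
    · subst h; simp [G.irrefl]
    · by_cases h2 : G.Adj v w <;> simp [h, h2]
  rw [Finset.sum_congr rfl fun w _ => step w, Finset.sum_add_distrib,
    Finset.sum_ite_eq Finset.univ v (fun w => (G.degree v : ℝ) * x w)]
  simp only [Finset.mem_univ, if_true]
  rw [hdeg, Finset.sum_mul, ← Finset.sum_add_distrib]
  apply Finset.sum_congr rfl
  intro w _
  by_cases h : G.Adj v w <;> simp [h] <;> ring

/-- (Replace an edge by a soft square) Deleting an edge `ij` with `x i = -x j` and adding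
two new vertices `k, l` (here `Sum.inr true` and `Sum.inr false`), each joined to `i` and
`j`, preserves the eigenvalue; the new vertices get value `0`. -/
theorem replace_edge_by_soft_square {V : Type*} [Fintype V] [DecidableEq V]
    (G : SimpleGraph V) [DecidableRel G.Adj] (lam : ℝ) (x : V → ℝ) (hx : x ≠ 0)
    (heig : lap G *ᵥ x = lam • x) (i j : V) (hadj : G.Adj i j) (hxij : x i = - x j)
    (G' : SimpleGraph (V ⊕ Bool)) [DecidableRel G'.Adj]
    (hll : ∀ a b, G'.Adj (Sum.inl a) (Sum.inl b) ↔
      (G.Adj a b ∧ ¬ (a = i ∧ b = j) ∧ ¬ (a = j ∧ b = i)))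
    (hlr : ∀ a t, G'.Adj (Sum.inl a) (Sum.inr t) ↔ (a = i ∨ a = j))
    (hrr : ∀ s t, ¬ G'.Adj (Sum.inr s) (Sum.inr t)) :
    Sum.elim x (0 : Bool → ℝ) ≠ 0 ∧
      lap G' *ᵥ Sum.elim x (0 : Bool → ℝ) = lam • Sum.elim x (0 : Bool → ℝ) := by
  have hij : i ≠ j := G.ne_of_adj hadj
  constructor
  · intro h
    apply hx
    funext a
    have := congrFun h (Sum.inl a)
    simpa using this
  · funext v
    have key : ∀ a : V, (lap G *ᵥ x) a = lam * x a := by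
      intro a; rw [heig]; rfl
    rw [lap_mulVec]
    rw [Fintype.sum_sum_type]
    cases v with
    | inl a =>
      simp only [Sum.elim_inl, Sum.elim_inr, Pi.zero_apply, Pi.smul_apply, smul_eq_mul]
      by_cases hai : a = i
      · subst hai
        -- second sum: both booleans contribute x a - 0
        have h2 : (∑ t : Bool, if G'.Adj (Sum.inl a) (Sum.inr t) then x a - 0 else 0) = 2 * x a := by
          simp [hlr]
        have h1 : (∑ b : V, if G'.Adj (Sum.inl a) (Sum.inl b) then x a - x b else 0)
            = (∑ b : V, if G.Adj a b then x a - x b else 0) - (x a - x j) := by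
          have hsum : (∑ b : V, if b = j then x a - x b else 0) = x a - x j := by
            rw [Finset.sum_ite_eq' Finset.univ j (fun b => x a - x b)]; simp
          rw [eq_sub_iff_add_eq, ← hsum, ← Finset.sum_add_distrib]
          apply Finset.sum_congr rfl
          intro b _
          by_cases hb : b = j
          · subst hb
            simp [hll, hadj, hij]
          · by_cases hab : G.Adj a b <;> simp [hll, hab, hb, hij]
        rw [h1, h2, ← lap_mulVec, key]
        have : x j = - x a := by rw [hxij]; ring
        rw [this]; ring
      · by_cases haj : a = j
        · subst haj
          have h2 : (∑ t : Bool, if G'.Adj (Sum.inl a) (Sum.inr t) then x a - 0 else 0) = 2 * x a := by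
            simp [hlr]
          have h1 : (∑ b : V, if G'.Adj (Sum.inl a) (Sum.inl b) then x a - x b else 0)
              = (∑ b : V, if G.Adj a b then x a - x b else 0) - (x a - x i) := by
            have hsum : (∑ b : V, if b = i then x a - x b else 0) = x a - x i := by
              rw [Finset.sum_ite_eq' Finset.univ i (fun b => x a - x b)]; simp
            rw [eq_sub_iff_add_eq, ← hsum, ← Finset.sum_add_distrib]
            apply Finset.sum_congr rfl
            intro b _
            by_cases hb : b = i
            · subst hb
              simp [hll, hadj.symm, hij.symm]
            · by_cases hab : G.Adj a b <;> simp [hll, hab, hb, hij.symm]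
          rw [h1, h2, ← lap_mulVec, key]
          rw [hxij]; ring
        · have h2 : (∑ t : Bool, if G'.Adj (Sum.inl a) (Sum.inr t) then x a - 0 else 0) = 0 := by
            simp [hlr, hai, haj]
          have h1 : (∑ b : V, if G'.Adj (Sum.inl a) (Sum.inl b) then x a - x b else 0)
              = (∑ b : V, if G.Adj a b then x a - x b else 0) := by
            apply Finset.sum_congr rfl
            intro b _
            by_cases hab : G.Adj a b <;> simp [hll, hab, hai, haj]
          rw [h1, h2, ← lap_mulVec, key]; ring
    | inr t =>
      simp only [Sum.elim_inl, Sum.elim_inr, Pi.zero_apply, Pi.smul_apply, smul_eq_mul]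
      have h2 : (∑ s : Bool, if G'.Adj (Sum.inr t) (Sum.inr s) then (0:ℝ) - 0 else 0) = 0 := by
        simp [hrr]
      have h1 : (∑ b : V, if G'.Adj (Sum.inr t) (Sum.inl b) then (0:ℝ) - x b else 0)
          = - x i - x j := by
        have hsym : ∀ b : V, G'.Adj (Sum.inr t) (Sum.inl b) ↔ (b = i ∨ b = j) := by
          intro b; rw [SimpleGraph.adj_comm]; exact hlr b t
        have : ∀ b : V, (if G'.Adj (Sum.inr t) (Sum.inl b) then (0:ℝ) - x b else 0)
            = (if b = i then -x b else 0) + (if b = j then -x b else 0) := by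
          intro b
          by_cases hbi : b = i
          · subst hbi; simp [hsym, hij, hij.symm]
          · by_cases hbj : b = j
            · subst hbj; simp [hsym, hij.symm]
            · simp [hsym, hbi, hbj]
        rw [Finset.sum_congr rfl fun b _ => this b, Finset.sum_add_distrib,
          Finset.sum_ite_eq' Finset.univ i (fun b => -x b),
          Finset.sum_ite_eq' Finset.univ j (fun b => -x b)]
        simp; ring
      rw [h1, h2, hxij]; ring
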